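/- arXiv:2107.05878 — 2 statements merged into one kernel-verified Lean document; each statement's English description precedes it below -/
import Mathlib

section
/- Let A be an n×n Metzler matrix with strictly positive column sums dominated structure as in the SIR linearization, C > 0 a strictly positive cost vector, and r ≥ 0. The linear constraints p ≥ 0 and pᵀ A - r pᵀ ≤ -C admit a solution if and only if A - rI is Hurwitz-stable, i.e. the largest real part of the eigenvalues of A is strictly less than r. -/
/-!
If `p ≥ 0` and `pᵀ A < r pᵀ` entrywise, and `A v = μ v`, the Metzler property gives
`Re μ · |v| ≤ A |v|` entrywise, and pairing with `p` forces `Re μ < r`.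
Conversely, for `c` large the matrix `M = (A + c I) / (r + c)` is entrywise nonnegative with
spectrum inside the open unit disc, so `M ^ k → 0` by Gelfand's formula, the Neumann series
shows `(r I - A)⁻¹ = (r + c)⁻¹ (I - M)⁻¹ ≥ 0`, and `p = (r I - A)⁻ᵀ C` is feasible.
-/

open Filter Topology

theorem Complex.eventually_norm_add_ofReal_lt {μ : ℂ} {r : ℝ} (h : μ.re < r) :
    ∀ᶠ c : ℝ in atTop, ‖μ + c‖ < r + c := by
  filter_upwards [eventually_gt_atTop (-r),
    eventually_gt_atTop ((‖μ‖ ^ 2 - r ^ 2) / (2 * (r - μ.re)))] with c hrc hc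
  rw [div_lt_iff₀ (by linarith)] at hc
  have hsq : ‖μ + c‖ ^ 2 = ‖μ‖ ^ 2 + 2 * c * μ.re + c ^ 2 := by
    simp only [Complex.sq_norm, Complex.normSq_apply, Complex.add_re, Complex.add_im,
      Complex.ofReal_re, Complex.ofReal_im]
    ring
  exact lt_of_pow_lt_pow_left₀ 2 (by linarith) (by nlinarith)

theorem spectrum.tendsto_pow_atTop_nhds_zero_of_spectralRadius_lt_one {A : Type*} [NormedRing A]
    [NormedAlgebra ℂ A] [CompleteSpace A] {a : A} (h : spectralRadius ℂ a < 1) :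
    Tendsto (a ^ ·) atTop (𝓝 0) := by
  obtain ⟨q, hρq, hq1⟩ := ENNReal.lt_iff_exists_nnreal_btwn.mp h
  have hq : (q : ℝ) < 1 := by exact_mod_cast hq1
  refine squeeze_zero_norm' ?_ (tendsto_pow_atTop_nhds_zero_of_lt_one q.coe_nonneg hq)
  filter_upwards [(pow_nnnorm_pow_one_div_tendsto_nhds_spectralRadius a).eventually_lt_const hρq,
    eventually_ne_atTop 0] with k hk hk0
  have : ‖a ^ k‖₊ ≤ q ^ k := by
    have := ENNReal.rpow_le_rpow hk.le (Nat.cast_nonneg k : (0 : ℝ) ≤ k)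
    rw [← ENNReal.rpow_mul, one_div_mul_cancel (by exact_mod_cast hk0), ENNReal.rpow_one,
      ENNReal.rpow_natCast] at this
    exact_mod_cast this
  exact_mod_cast this

theorem spectrum.smul_add_algebraMap_eq_image {𝕜 A : Type*} [Field 𝕜] [Ring A] [Algebra 𝕜 A]
    (a : A) {k : 𝕜} (hk : k ≠ 0) (c : 𝕜) :
    spectrum 𝕜 (k • (a + algebraMap 𝕜 A c)) = (fun μ => k * (μ + c)) '' spectrum 𝕜 a := by
  change spectrum 𝕜 (Units.mk0 k hk • (a + algebraMap 𝕜 A c)) = _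
  rw [spectrum.unit_smul_eq_smul, ← spectrum.add_singleton_eq,
    Set.add_singleton, ← Set.image_smul, Set.image_image]
  rfl

namespace Matrix

variable {ι : Type*} [Fintype ι] [DecidableEq ι]

theorem exists_mulVec_eq_smul_of_mem_spectrum {K : Type*} [Field K] {M : Matrix ι ι K} {μ : K}
    (h : μ ∈ spectrum K M) : ∃ v ≠ 0, M *ᵥ v = μ • v := by
  rw [← spectrum_toLin', ← Module.End.hasEigenvalue_iff_mem_spectrum] at h
  obtain ⟨v, hv⟩ := h.exists_hasEigenvector
  exact ⟨v, hv.2, by simpa using hv.apply_eq_smul⟩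

theorem isUnit_one_sub_of_tendsto_pow_atTop_nhds_zero {K : Type*} [Field K] [TopologicalSpace K]
    [IsTopologicalRing K] [T1Space K] {M : Matrix ι ι K} (h : Tendsto (M ^ ·) atTop (𝓝 0)) :
    IsUnit (1 - M) := by
  have hdet : Tendsto (fun k => (1 - M ^ k).det) atTop (𝓝 1) := by
    have hcont : Continuous fun X : Matrix ι ι K => X.det := continuous_id.matrix_det
    have := (hcont.tendsto _).comp ((tendsto_const_nhds (x := 1)).sub h)
    rwa [sub_zero, det_one] at this
  obtain ⟨k, hk⟩ := (hdet.eventually_ne one_ne_zero).exists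
  rw [← geom_sum_mul_neg, det_mul] at hk
  exact (isUnit_iff_isUnit_det _).mpr (right_ne_zero_of_mul hk).isUnit

theorem inv_one_sub_apply_nonneg_of_tendsto_pow_atTop_nhds_zero {M : Matrix ι ι ℝ}
    (hM : ∀ i j, 0 ≤ M i j) (h : Tendsto (M ^ ·) atTop (𝓝 0)) (i j : ι) : 0 ≤ (1 - M)⁻¹ i j := by
  have hdet := (isUnit_iff_isUnit_det _).mp (isUnit_one_sub_of_tendsto_pow_atTop_nhds_zero h)
  have hneumann : Tendsto (fun K => ∑ k ∈ Finset.range K, M ^ k) atTop (𝓝 (1 - M)⁻¹) := by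
    have hsum (K : ℕ) : ∑ k ∈ Finset.range K, M ^ k = (1 - M ^ K) * (1 - M)⁻¹ := by
      rw [← geom_sum_mul_neg, mul_assoc, mul_nonsing_inv _ hdet, mul_one]
    simp_rw [hsum]
    simpa using ((tendsto_const_nhds (x := 1)).sub h).mul_const (1 - M)⁻¹
  refine ge_of_tendsto (((continuous_apply j).comp (continuous_apply i)).tendsto _ |>.comp hneumann)
    (Eventually.of_forall fun K => ?_)
  change 0 ≤ (∑ k ∈ Finset.range K, M ^ k) i j
  rw [sum_apply]
  exact Finset.sum_nonneg fun k _ => pow_apply_nonneg hM k i j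

theorem tendsto_pow_atTop_nhds_zero_of_forall_norm_lt_one {M : Matrix ι ι ℂ}
    (h : ∀ z ∈ spectrum ℂ M, ‖z‖ < 1) : Tendsto (M ^ ·) atTop (𝓝 0) := by
  rcases isEmpty_or_nonempty ι with hι | hι
  · exact tendsto_const_nhds.congr fun _ => Subsingleton.elim _ _
  let _ : NormedRing (Matrix ι ι ℂ) := Matrix.linftyOpNormedRing
  let _ : NormedAlgebra ℂ (Matrix ι ι ℂ) := Matrix.linftyOpNormedAlgebra
  refine spectrum.tendsto_pow_atTop_nhds_zero_of_spectralRadius_lt_one ?_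
  simpa using spectrum.spectralRadius_lt_of_forall_lt (r := 1) M fun z hz => by
    simpa [← NNReal.coe_lt_coe] using h z hz

theorem tendsto_pow_atTop_nhds_zero_of_forall_norm_map_ofReal_lt_one {M : Matrix ι ι ℝ}
    (h : ∀ z ∈ spectrum ℂ (M.map Complex.ofReal), ‖z‖ < 1) : Tendsto (M ^ ·) atTop (𝓝 0) := by
  have hpow (k : ℕ) : M ^ k = ((M.map Complex.ofReal) ^ k).map Complex.re := by
    change M ^ k = (Complex.ofRealHom.mapMatrix M ^ k).map Complex.re
    rw [← map_pow]
    ext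
    simp
  have hre : Continuous fun X : Matrix ι ι ℂ => X.map Complex.re :=
    continuous_id.matrix_map Complex.continuous_re
  simp_rw [hpow]
  have := (hre.tendsto 0).comp (tendsto_pow_atTop_nhds_zero_of_forall_norm_lt_one h)
  rwa [Matrix.map_zero _ Complex.zero_re] at this

def IsMetzler (A : Matrix ι ι ℝ) : Prop :=
  ∀ i j, i ≠ j → 0 ≤ A i j

namespace IsMetzler

variable {A : Matrix ι ι ℝ} (hA : A.IsMetzler)
include hA

theorem re_mul_norm_le_mulVec {μ : ℂ} {v : ι → ℂ} (hv : A.map Complex.ofReal *ᵥ v = μ • v)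
    (j : ι) : μ.re * ‖v j‖ ≤ (A *ᵥ fun k => ‖v k‖) j := by
  set a := A j j
  have hrow : (μ - a) * v j = ∑ k, ((A - a • 1) j k : ℂ) * v k := by
    have := congrFun hv j
    simp only [mulVec, dotProduct, map_apply, Pi.smul_apply, smul_eq_mul] at this
    simp [sub_mul, Finset.sum_sub_distrib, one_apply, this, apply_ite Complex.ofReal, ite_mul]
  have hnonneg (k : ι) : 0 ≤ (A - a • 1) j k := by
    by_cases hk : j = k
    · simp [hk, a]
    · simpa [one_apply_ne hk] using hA j k hk
  calc μ.re * ‖v j‖ = a * ‖v j‖ + (μ - a).re * ‖v j‖ := by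
        rw [Complex.sub_re, Complex.ofReal_re]; ring
    _ ≤ a * ‖v j‖ + ‖(μ - a) * v j‖ := by
      rw [norm_mul]; gcongr; exact Complex.re_le_norm _
    _ ≤ a * ‖v j‖ + ∑ k, (A - a • 1) j k * ‖v k‖ := by
      rw [hrow]
      gcongr
      refine (norm_sum_le _ _).trans_eq (Finset.sum_congr rfl fun k _ => ?_)
      rw [norm_mul, Complex.norm_real, Real.norm_of_nonneg (hnonneg k)]
    _ = (A *ᵥ fun k => ‖v k‖) j := by
      simp [mulVec, dotProduct, sub_mul, Finset.sum_sub_distrib, one_apply, a]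

theorem re_lt_of_vecMul_lt {p : ι → ℝ} (hp : ∀ i, 0 ≤ p i) {r : ℝ}
    (hpA : ∀ j, (p ᵥ* A) j < r * p j) {μ : ℂ} (hμ : μ ∈ spectrum ℂ (A.map Complex.ofReal)) :
    μ.re < r := by
  obtain ⟨v, hv, hAv⟩ := exists_mulVec_eq_smul_of_mem_spectrum hμ
  set u : ι → ℝ := fun k => ‖v k‖
  obtain ⟨k, hk⟩ := Function.ne_iff.mp hv
  have hu : 0 < ‖v k‖ := norm_pos_iff.mpr hk
  have hgap : (p ᵥ* A) ⬝ᵥ u < r * (p ⬝ᵥ u) := by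
    rw [dotProduct, dotProduct, Finset.mul_sum]
    refine Finset.sum_lt_sum (fun j _ => ?_) ⟨k, Finset.mem_univ _, ?_⟩
    · nlinarith [hpA j, norm_nonneg (v j)]
    · nlinarith [hpA k]
  have : μ.re * (p ⬝ᵥ u) ≤ (p ᵥ* A) ⬝ᵥ u := by
    rw [← dotProduct_mulVec, dotProduct, dotProduct, Finset.mul_sum]
    exact Finset.sum_le_sum fun j _ => by
      nlinarith [mul_le_mul_of_nonneg_left (hA.re_mul_norm_le_mulVec hAv j) (hp j)]
  have hpu : 0 ≤ p ⬝ᵥ u := Finset.sum_nonneg fun j _ => mul_nonneg (hp j) (norm_nonneg _)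
  by_contra! hr
  nlinarith [mul_le_mul_of_nonneg_right hr hpu]

theorem isUnit_smul_one_sub_and_inv_apply_nonneg {r : ℝ}
    (h : ∀ μ ∈ spectrum ℂ (A.map Complex.ofReal), μ.re < r) :
    IsUnit (r • 1 - A) ∧ ∀ i j, 0 ≤ (r • 1 - A)⁻¹ i j := by
  obtain ⟨c, hrc, hdiag, hshift⟩ : ∃ c : ℝ, 0 < r + c ∧ (∀ i, 0 ≤ A i i + c) ∧
      ∀ μ ∈ spectrum ℂ (A.map Complex.ofReal), ‖μ + c‖ < r + c := by
    obtain ⟨c, h₁, h₂, h₃⟩ := ((eventually_gt_atTop (-r)).and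
      ((eventually_all.2 fun i => eventually_ge_atTop (-A i i)).and
      ((finite_spectrum _).eventually_all.2 fun μ hμ =>
        Complex.eventually_norm_add_ofReal_lt (h μ hμ)))).exists
    exact ⟨c, by linarith, fun i => by linarith [h₂ i], h₃⟩
  set M := (r + c)⁻¹ • (A + c • 1)
  have hM (i j : ι) : 0 ≤ M i j := by
    refine mul_nonneg (inv_nonneg.2 hrc.le) ?_
    by_cases hij : i = j
    · simpa [hij] using hdiag j
    · simpa [one_apply_ne hij] using hA i j hij
  have hMspec : ∀ z ∈ spectrum ℂ (M.map Complex.ofReal), ‖z‖ < 1 := by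
    have hMC : M.map Complex.ofReal = ((r + c : ℝ) : ℂ)⁻¹ •
        (A.map Complex.ofReal + algebraMap ℂ (Matrix ι ι ℂ) c) := by
      ext i j
      by_cases hij : i = j <;> simp [M, hij, algebraMap_eq_diagonal, mul_add]
    rw [hMC, spectrum.smul_add_algebraMap_eq_image _ (by exact_mod_cast (inv_pos.2 hrc).ne')]
    rintro _ ⟨μ, hμ, rfl⟩
    rw [norm_mul, norm_inv, Complex.norm_real, Real.norm_of_nonneg hrc.le, inv_mul_lt_one₀ hrc]
    exact hshift μ hμ
  have hMpow := tendsto_pow_atTop_nhds_zero_of_forall_norm_map_ofReal_lt_one hMspec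
  have hunit := isUnit_one_sub_of_tendsto_pow_atTop_nhds_zero hMpow
  have hsub : r • 1 - A = (r + c) • (1 - M) := by
    rw [smul_sub, smul_smul, mul_inv_cancel₀ hrc.ne', one_smul, add_smul]
    abel
  rw [hsub]
  refine ⟨hunit.smul (Units.mk0 _ hrc.ne'), fun i j => ?_⟩
  have hinv : ((r + c) • (1 - M))⁻¹ = (r + c)⁻¹ • (1 - M)⁻¹ :=
    inv_smul' _ (Units.mk0 _ hrc.ne') ((isUnit_iff_isUnit_det _).mp hunit)
  rw [hinv]
  exact mul_nonneg (inv_nonneg.2 hrc.le)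
    (inv_one_sub_apply_nonneg_of_tendsto_pow_atTop_nhds_zero hM hMpow i j)

end IsMetzler

end Matrix

open Matrix

theorem dual_feasible_iff_hurwitz_general
    {n : ℕ} (A : Matrix (Fin n) (Fin n) ℝ) (C : Fin n → ℝ) (r : ℝ)
    (hMetzler : ∀ i j, i ≠ j → 0 ≤ A i j)
    (hC : ∀ i, 0 < C i) :
    (∃ p : Fin n → ℝ, (∀ i, 0 ≤ p i) ∧ ∀ j, (p ᵥ* A) j - r * p j ≤ -C j) ↔
      (∀ μ : ℂ, μ ∈ spectrum ℂ (A.map Complex.ofReal) → μ.re < r) := by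
  constructor
  · rintro ⟨p, hp, hpA⟩ μ hμ
    exact IsMetzler.re_lt_of_vecMul_lt hMetzler hp (fun j => by linarith [hpA j, hC j]) hμ
  · intro h
    obtain ⟨hunit, hinv⟩ := IsMetzler.isUnit_smul_one_sub_and_inv_apply_nonneg hMetzler h
    have hp : (C ᵥ* (r • 1 - A)⁻¹) ᵥ* (r • 1 - A) = C := by
      rw [vecMul_vecMul, nonsing_inv_mul _ ((isUnit_iff_isUnit_det _).mp hunit), vecMul_one]
    refine ⟨C ᵥ* (r • 1 - A)⁻¹, fun i => ?_, fun j => ?_⟩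
    · show 0 ≤ ∑ k, C k * (r • 1 - A)⁻¹ k i
      exact Finset.sum_nonneg fun k _ => mul_nonneg (hC k).le (hinv k i)
    · have := congrFun hp j
      rw [vecMul_sub, vecMul_smul, vecMul_one] at this
      simp only [Pi.sub_apply, Pi.smul_apply, smul_eq_mul] at this
      linarith

/-- For a Metzler matrix `A` and strictly positive cost vector `C`, the linear
constraints `p ≥ 0`, `pᵀ A - r pᵀ ≤ -C` are feasible if and only if `A - rI` is
Hurwitz-stable, i.e. every eigenvalue of `A` has real part strictly less
than `r`. -/
theorem dual_feasible_iff_hurwitz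
    {n : ℕ} (hn : 0 < n) (A : Matrix (Fin n) (Fin n) ℝ) (C : Fin n → ℝ) (r : ℝ)
    (hMetzler : ∀ i j, i ≠ j → 0 ≤ A i j)
    (hC : ∀ i, 0 < C i) (hr : 0 ≤ r) :
    (∃ p : Fin n → ℝ, (∀ i, 0 ≤ p i) ∧ ∀ j, (p ᵥ* A) j - r * p j ≤ -C j) ↔
      (∀ μ : ℂ, μ ∈ spectrum ℂ (A.map Complex.ofReal) → μ.re < r) :=
  dual_feasible_iff_hurwitz_general A C r hMetzler hC
end

section
/- Consider the nonlinear SIR mean-field dynamics χ̇ᵢ = (1 - χᵢ - zᵢ) Σⱼ βᵢⱼ χⱼ - δᵢ χᵢ, żᵢ = δᵢ χᵢ with βᵢⱼ ≥ 0, δᵢ ≥ 0, and the linear system ẋᵢ = Σⱼ βᵢⱼ xⱼ - δᵢ xᵢ. If 0 ≤ χᵢ(0) ≤ xᵢ(0), χᵢ(0) + zᵢ(0) ≤ 1, and zᵢ(0) ≥ 0 for all i, then xᵢ(t) ≥ χᵢ(t) ≥ 0 for all t ≥ 0 and all i. -/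
/-!
The susceptible fraction `s = 1 - χ - z` solves the scalar linear equation `sᵢ' = -(βχ)ᵢ sᵢ`,
so it stays nonnegative. Given `s ≥ 0`, the infected fraction solves `χ' = (diag s β - diag δ) χ`,
a linear system whose coefficient matrix is Metzler (nonnegative off the diagonal), hence `χ ≥ 0`;
then `z' = δχ ≥ 0`. Finally `d = x - χ` satisfies `d' = (β - diag δ) d + (χ + z) βχ`, and the
forcing term is nonnegative. Each step is an instance of positivity for Metzler linear
differential inequalities, which follows from Grönwall's inequality applied to `∑ᵢ (uᵢ⁻)²`.
-/

open Finset Set Filter Topology Asymptotics Matrix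

theorem hasDerivAt_negPart_sq (y : ℝ) : HasDerivAt (fun w : ℝ => w⁻ ^ 2) (-2 * y⁻) y := by
  rcases lt_trichotomy y 0 with hy | rfl | hy
  · have h : (fun w : ℝ => w⁻ ^ 2) =ᶠ[𝓝 y] fun w => w ^ 2 := by
      filter_upwards [eventually_lt_nhds hy] with w hw
      rw [negPart_eq_neg.2 hw.le, neg_sq]
    rw [negPart_eq_neg.2 hy.le]
    simpa using (hasDerivAt_pow 2 y).congr_of_eventuallyEq h
  · rw [hasDerivAt_iff_isLittleO_nhds_zero]
    refine (IsBigO.of_bound 1 (Eventually.of_forall fun w => ?_)).trans_isLittleO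
      (isLittleO_pow_id (n := 2) one_lt_two)
    rcases le_total w 0 with hw | hw
    · simp [negPart_eq_neg.2 hw]
    · simp [negPart_eq_zero.2 hw, sq_nonneg]
  · have h : (fun w : ℝ => w⁻ ^ 2) =ᶠ[𝓝 y] fun _ => 0 := by
      filter_upwards [eventually_gt_nhds hy] with w hw
      simp [negPart_eq_zero.2 hw.le]
    rw [negPart_eq_zero.2 hy.le]
    simpa using (hasDerivAt_const y (0 : ℝ)).congr_of_eventuallyEq h

theorem continuousOn_Ici_of_hasDerivAt {ι : Type*} {f f' : ℝ → ι → ℝ} {a : ℝ}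
    (hf : ∀ i, ∀ t, a ≤ t → HasDerivAt (fun s => f s i) (f' t i) t) : ContinuousOn f (Ici a) :=
  continuousOn_pi.2 fun i t ht => (hf i t ht).continuousAt.continuousWithinAt

theorem nonneg_on_Icc_of_neg_deriv_le_sum_negPart {ι : Type*} [Fintype ι] {u u' : ℝ → ι → ℝ}
    {T C : ℝ} (hu : ∀ i, ∀ t ∈ Icc 0 T, HasDerivAt (fun s => u s i) (u' t i) t)
    (h0 : 0 ≤ u 0) (hC : ∀ t ∈ Icc 0 T, ∀ i, u t i ≤ 0 → -u' t i ≤ C * ∑ j, (u t j)⁻) :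
    ∀ t ∈ Icc 0 T, 0 ≤ u t := by
  set φ : ℝ → ℝ := fun t => ∑ i, (u t i)⁻ ^ 2
  set φ' : ℝ → ℝ := fun t => ∑ i, -2 * (u t i)⁻ * u' t i
  have hφ : ∀ t ∈ Icc 0 T, HasDerivAt φ (φ' t) t := fun t ht =>
    HasDerivAt.fun_sum fun i _ =>
      (hasDerivAt_negPart_sq (u t i)).comp (h₂ := fun y => y⁻ ^ 2) t (hu i t ht)
  have hφ' : ∀ t ∈ Icc 0 T, φ' t ≤ 2 * |C| * Fintype.card ι * φ t := by
    intro t ht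
    set S := ∑ j, (u t j)⁻
    have hterm : ∀ i, (u t i)⁻ * -u' t i ≤ (u t i)⁻ * (C * S) := by
      intro i
      rcases le_or_gt (u t i) 0 with hi | hi
      · exact mul_le_mul_of_nonneg_left (hC t ht i hi) (negPart_nonneg _)
      · simp [negPart_eq_zero.2 hi.le]
    calc φ' t = 2 * ∑ i, (u t i)⁻ * -u' t i := by
          simp only [φ', Finset.mul_sum]; congr 1; ext i; ring
      _ ≤ 2 * ∑ i, (u t i)⁻ * (C * S) := by
          gcongr 2 * ?_; exact Finset.sum_le_sum fun i _ => hterm i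
      _ = 2 * C * S ^ 2 := by rw [← Finset.sum_mul]; ring
      _ ≤ 2 * |C| * S ^ 2 := by gcongr; exact le_abs_self C
      _ ≤ 2 * |C| * (Fintype.card ι * φ t) := by
          gcongr; exact sq_sum_le_card_mul_sum_sq
      _ = _ := by ring
  have hφ_le : ∀ t ∈ Icc 0 T, φ t ≤ gronwallBound 0 (2 * |C| * Fintype.card ι) 0 (t - 0) :=
    le_gronwallBound_of_liminf_deriv_right_le
      (fun t ht => (hφ t ht).continuousAt.continuousWithinAt)
      (fun t ht _ hr => (hφ t (Ico_subset_Icc_self ht)).hasDerivWithinAt.liminf_right_slope_le hr)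
      (by simp [φ, negPart_eq_zero.2 (h0 _)])
      (fun t ht => by simpa using hφ' t (Ico_subset_Icc_self ht))
  intro t ht i
  have hφt : φ t = 0 := le_antisymm (by simpa [gronwallBound_ε0_δ0] using hφ_le t ht)
    (Finset.sum_nonneg fun i _ => sq_nonneg _)
  have := (Finset.sum_eq_zero_iff_of_nonneg fun i _ => sq_nonneg _).1 hφt i (mem_univ i)
  exact negPart_eq_zero.1 (pow_eq_zero_iff two_ne_zero |>.1 this)

theorem neg_mul_le_mul_negPart {a b C : ℝ} (ha : |a| ≤ C) (hab : 0 ≤ a ∨ b ≤ 0) :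
    -(a * b) ≤ C * b⁻ := by
  have hb : -b ≤ b⁻ := neg_le_negPart b
  have hb0 : 0 ≤ b⁻ := negPart_nonneg b
  have haC : a ≤ C := (le_abs_self a).trans ha
  rcases hab with ha0 | hb'
  · nlinarith
  · rw [negPart_eq_neg.2 hb']
    nlinarith [neg_abs_le a]

theorem nonneg_of_metzler_mulVec_le_deriv {ι : Type*} [Fintype ι]
    {u u' : ℝ → ι → ℝ} {A : ℝ → Matrix ι ι ℝ} (hA : ContinuousOn A (Ici 0))
    (hA_offDiag : ∀ t, 0 ≤ t → ∀ i j, i ≠ j → 0 ≤ A t i j)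
    (hu : ∀ i, ∀ t, 0 ≤ t → HasDerivAt (fun s => u s i) (u' t i) t)
    (hAu : ∀ t, 0 ≤ t → A t *ᵥ u t ≤ u' t) (h0 : 0 ≤ u 0) :
    ∀ t, 0 ≤ t → 0 ≤ u t := by
  intro T hT
  obtain ⟨C, hC⟩ := (isCompact_Icc (a := (0 : ℝ)) (b := T)).exists_bound_of_continuousOn
    (f := fun t i j => A t i j) (continuousOn_pi.2 fun i => continuousOn_pi.2 fun j =>
      ((continuous_id.matrix_elem i j).comp_continuousOn hA).mono Icc_subset_Ici_self)
  have hAC : ∀ t ∈ Icc 0 T, ∀ i j, |A t i j| ≤ C := fun t ht i j =>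
    ((norm_le_pi_norm (A t i) j).trans (norm_le_pi_norm (fun i j => A t i j) i)).trans (hC t ht)
  refine nonneg_on_Icc_of_neg_deriv_le_sum_negPart (C := C) (fun i t ht => hu i t ht.1) h0
    (fun t ht i hi => ?_) T ⟨hT, le_rfl⟩
  calc -u' t i ≤ ∑ j, -(A t i j * u t j) := by
        rw [Finset.sum_neg_distrib, neg_le_neg_iff]; exact hAu t ht.1 i
    _ ≤ ∑ j, C * (u t j)⁻ := Finset.sum_le_sum fun j _ => neg_mul_le_mul_negPart (hAC t ht i j)
        (by rcases eq_or_ne i j with rfl | hij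
            exacts [Or.inr hi, Or.inl (hA_offDiag t ht.1 i j hij)])
    _ = C * ∑ j, (u t j)⁻ := (Finset.mul_sum _ _ _).symm

structure IsSIRSolution {ι : Type*} [Fintype ι] (β : ι → ι → ℝ) (δ : ι → ℝ)
    (χ z : ℝ → ι → ℝ) : Prop where
  hasDerivAt_infected : ∀ i, ∀ t, 0 ≤ t → HasDerivAt (fun s => χ s i)
    ((1 - χ t i - z t i) * (∑ j, β i j * χ t j) - δ i * χ t i) t
  hasDerivAt_removed : ∀ i, ∀ t, 0 ≤ t → HasDerivAt (fun s => z s i) (δ i * χ t i) t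

namespace IsSIRSolution

variable {ι : Type*} [Fintype ι] {β : ι → ι → ℝ} {δ : ι → ℝ} {χ z : ℝ → ι → ℝ}

theorem continuousOn_infected (h : IsSIRSolution β δ χ z) : ContinuousOn χ (Ici 0) :=
  continuousOn_Ici_of_hasDerivAt h.hasDerivAt_infected

theorem continuousOn_removed (h : IsSIRSolution β δ χ z) : ContinuousOn z (Ici 0) :=
  continuousOn_Ici_of_hasDerivAt h.hasDerivAt_removed

theorem susceptible_nonneg (h : IsSIRSolution β δ χ z) (h0 : χ 0 + z 0 ≤ 1) :
    ∀ t, 0 ≤ t → 0 ≤ 1 - χ t - z t := by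
  classical
  refine nonneg_of_metzler_mulVec_le_deriv
    (A := fun t => Matrix.diagonal fun i => -∑ j, β i j * χ t j)
    (u' := fun t i => -((1 - χ t i - z t i) * ∑ j, β i j * χ t j)) ?_ ?_ ?_ ?_
    (fun i => by simpa [sub_sub, sub_nonneg] using h0 i)
  · have := h.continuousOn_infected
    fun_prop
  · intro t _ i j hij
    simp [diagonal_apply_ne _ hij]
  · intro i t ht
    exact (((h.hasDerivAt_infected i t ht).const_sub 1).sub
      (h.hasDerivAt_removed i t ht)).congr_deriv (by ring)
  · intro t _ i
    simp only [mulVec_diagonal, Pi.sub_apply, Pi.one_apply]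
    linarith

theorem infected_nonneg (h : IsSIRSolution β δ χ z) (hβ : ∀ i j, 0 ≤ β i j)
    (hsum0 : χ 0 + z 0 ≤ 1) (hχ0 : 0 ≤ χ 0) : ∀ t, 0 ≤ t → 0 ≤ χ t := by
  classical
  have hS := h.susceptible_nonneg hsum0
  refine nonneg_of_metzler_mulVec_le_deriv
    (A := fun t => Matrix.diagonal (1 - χ t - z t) * of β - Matrix.diagonal δ) ?_ ?_
    h.hasDerivAt_infected ?_ hχ0
  · have := h.continuousOn_infected
    have := h.continuousOn_removed
    fun_prop
  · intro t ht i j hij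
    simpa [diagonal_apply_ne _ hij] using mul_nonneg (hS t ht i) (hβ i j)
  · intro t _ i
    rw [sub_mulVec, ← mulVec_mulVec, Pi.sub_apply, mulVec_diagonal, mulVec_diagonal]
    exact le_rfl

theorem removed_nonneg (h : IsSIRSolution β δ χ z) (hδ : 0 ≤ δ) (hχ : ∀ t, 0 ≤ t → 0 ≤ χ t)
    (hz0 : 0 ≤ z 0) : ∀ t, 0 ≤ t → 0 ≤ z t :=
  nonneg_of_metzler_mulVec_le_deriv (A := 0) continuousOn_const (fun _ _ _ _ _ => le_rfl)
    h.hasDerivAt_removed (fun t ht i => by simpa using mul_nonneg (hδ i) (hχ t ht i)) hz0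

theorem infected_le_of_linear (h : IsSIRSolution β δ χ z) (hβ : ∀ i j, 0 ≤ β i j)
    {x : ℝ → ι → ℝ} (hx : ∀ i, ∀ t, 0 ≤ t → HasDerivAt (fun s => x s i)
      ((∑ j, β i j * x t j) - δ i * x t i) t)
    (hχ : ∀ t, 0 ≤ t → 0 ≤ χ t) (hz : ∀ t, 0 ≤ t → 0 ≤ z t) (hχx0 : χ 0 ≤ x 0) :
    ∀ t, 0 ≤ t → χ t ≤ x t := by
  classical
  suffices hd : ∀ t, 0 ≤ t → 0 ≤ (x - χ) t from fun t ht => sub_nonneg.1 (hd t ht)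
  refine nonneg_of_metzler_mulVec_le_deriv (A := fun _ => of β - Matrix.diagonal δ)
    continuousOn_const ?_ (fun i t ht => (hx i t ht).sub (h.hasDerivAt_infected i t ht)) ?_
    (sub_nonneg.2 hχx0)
  · intro _ _ i j hij
    simpa [diagonal_apply_ne _ hij] using hβ i j
  · intro t ht i
    have hforce : 0 ≤ (χ t i + z t i) * ∑ j, β i j * χ t j :=
      mul_nonneg (add_nonneg (hχ t ht i) (hz t ht i))
        (Finset.sum_nonneg fun j _ => mul_nonneg (hβ i j) (hχ t ht j))
    rw [sub_mulVec, Pi.sub_apply, mulVec_diagonal, Pi.sub_apply, mulVec_sub, Pi.sub_apply]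
    change (∑ j, β i j * x t j) - (∑ j, β i j * χ t j) - δ i * (x t i - χ t i) ≤ _
    linarith

end IsSIRSolution

/-- Comparison principle: the linearized SIR dynamics upper bound the nonlinear
mean-field SIR dynamics. If `0 ≤ χᵢ(0) ≤ xᵢ(0)`, `zᵢ(0) ≥ 0` and
`χᵢ(0) + zᵢ(0) ≤ 1` for all `i`, then `xᵢ(t) ≥ χᵢ(t) ≥ 0` for all `t ≥ 0`. -/
theorem sir_linear_upper_bounds_nonlinear
    {n : ℕ} (β : Fin n → Fin n → ℝ) (δ : Fin n → ℝ)
    (hβ : ∀ i j, 0 ≤ β i j) (hδ : ∀ i, 0 ≤ δ i)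
    (χ z x : ℝ → Fin n → ℝ)
    (hχ : ∀ i, ∀ t : ℝ, 0 ≤ t → HasDerivAt (fun s => χ s i)
      ((1 - χ t i - z t i) * (∑ j, β i j * χ t j) - δ i * χ t i) t)
    (hz : ∀ i, ∀ t : ℝ, 0 ≤ t → HasDerivAt (fun s => z s i) (δ i * χ t i) t)
    (hx : ∀ i, ∀ t : ℝ, 0 ≤ t → HasDerivAt (fun s => x s i)
      ((∑ j, β i j * x t j) - δ i * x t i) t)
    (hχ0 : ∀ i, 0 ≤ χ 0 i) (hχx0 : ∀ i, χ 0 i ≤ x 0 i)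
    (hz0 : ∀ i, 0 ≤ z 0 i) (hsum0 : ∀ i, χ 0 i + z 0 i ≤ 1) :
    ∀ t : ℝ, 0 ≤ t → ∀ i, 0 ≤ χ t i ∧ χ t i ≤ x t i := by
  have hSIR : IsSIRSolution β δ χ z := ⟨hχ, hz⟩
  have hχ_nonneg := hSIR.infected_nonneg hβ hsum0 hχ0
  have hz_nonneg := hSIR.removed_nonneg hδ hχ_nonneg hz0
  intro t ht i
  exact ⟨hχ_nonneg t ht i, hSIR.infected_le_of_linear hβ hx hχ_nonneg hz_nonneg hχx0 t ht i⟩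
end
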